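/- arXiv:1910.12297 — 4 statements merged into one kernel-verified Lean document; each statement's English description precedes it below -/
import Mathlib

section
/- Let a, λ ∈ (−∞, 1) with λ < a, and let c ∈ (0, 1]. Then ∫₀¹ t^{−a} (c + t)^{λ−1} dt ≤ c^{λ−a} (1−λ) / ((1−a)(a−λ)). -/
/-!
Split the integral at `t = c`. On `[0, c]` bound `(c + t)^(λ-1) ≤ c^(λ-1)`, and on `[c, 1]` bound
`(c + t)^(λ-1) ≤ t^(λ-1)`; both pieces then integrate explicitly, to `c^(λ-a)/(1-a)` and to at most
`c^(λ-a)/(a-λ)` (the tail `∫_c^∞ t^(λ-a-1)`). These two add up to the right-hand side.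
-/

open intervalIntegral Real Set

theorem integral_rpow_sub_one_le_of_neg {r b c : ℝ} (hr : r < 0) (hc : 0 < c) (hcb : c ≤ b) :
    ∫ t in c..b, t ^ (r - 1) ≤ c ^ r / -r := by
  have hb : 0 < b := hc.trans_le hcb
  rw [integral_rpow (Or.inr ⟨by linarith, by simp [uIcc_of_le hcb, hc.not_ge]⟩), sub_add_cancel,
    ← neg_div_neg_eq, neg_sub]
  gcongr
  · linarith
  · linarith [rpow_pos_of_pos hb r]

section Kernel

variable {a lam c : ℝ}

theorem intervalIntegrable_rpow_mul_add_rpow (ha : a < 1) (hc : 0 < c) (p : ℝ) {b : ℝ}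
    (hb : 0 ≤ b) :
    IntervalIntegrable (fun t : ℝ => t ^ (-a) * (c + t) ^ p) MeasureTheory.volume 0 b := by
  refine (intervalIntegrable_rpow' (by linarith)).mul_continuousOn ?_
  refine ContinuousOn.rpow_const (by fun_prop) fun t ht => Or.inl ?_
  rw [uIcc_of_le hb] at ht
  linarith [ht.1]

theorem integral_rpow_mul_add_rpow_le_head (ha : a < 1) (hlam : lam ≤ 1) (hc : 0 < c) :
    ∫ t in (0 : ℝ)..c, t ^ (-a) * (c + t) ^ (lam - 1) ≤ c ^ (lam - a) / (1 - a) := by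
  have hpow : IntervalIntegrable (fun t : ℝ => t ^ (-a)) MeasureTheory.volume 0 c :=
    intervalIntegrable_rpow' (by linarith)
  calc ∫ t in (0 : ℝ)..c, t ^ (-a) * (c + t) ^ (lam - 1)
      ≤ ∫ t in (0 : ℝ)..c, t ^ (-a) * c ^ (lam - 1) := by
        refine integral_mono_on hc.le (intervalIntegrable_rpow_mul_add_rpow ha hc _ hc.le)
          (hpow.mul_const _) fun t ht => ?_
        exact mul_le_mul_of_nonneg_left
          (rpow_le_rpow_of_nonpos hc (by linarith [ht.1]) (by linarith)) (rpow_nonneg ht.1 _)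
    _ = c ^ (lam - a) / (1 - a) := by
        rw [integral_mul_const, integral_rpow (Or.inl (by linarith)),
          zero_rpow (by linarith : -a + 1 ≠ 0), sub_zero, div_mul_eq_mul_div, ← rpow_add hc]
        ring_nf

theorem integral_rpow_mul_add_rpow_le_tail (hlam : lam ≤ 1) (hla : lam < a) (hc : 0 < c)
    {b : ℝ} (hcb : c ≤ b) :
    ∫ t in c..b, t ^ (-a) * (c + t) ^ (lam - 1) ≤ c ^ (lam - a) / (a - lam) := by
  have hpos : ∀ t ∈ uIcc c b, 0 < t := fun t ht => hc.trans_le (uIcc_of_le hcb ▸ ht).1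
  have hcont : ContinuousOn (fun t : ℝ => t ^ (-a)) (uIcc c b) :=
    continuousOn_id.rpow_const fun t ht => Or.inl (hpos t ht).ne'
  calc ∫ t in c..b, t ^ (-a) * (c + t) ^ (lam - 1)
      ≤ ∫ t in c..b, t ^ ((lam - a) - 1) := by
        refine integral_mono_on hcb ?_ ?_ fun t ht => ?_
        · refine (hcont.mul (ContinuousOn.rpow_const (by fun_prop) fun t ht => Or.inl ?_))
            |>.intervalIntegrable
          linarith [hpos t ht]
        · exact (continuousOn_id.rpow_const fun t ht => Or.inl (hpos t ht).ne').intervalIntegrable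
        · have ht0 := hpos t (uIcc_of_le hcb ▸ ht)
          calc t ^ (-a) * (c + t) ^ (lam - 1) ≤ t ^ (-a) * t ^ (lam - 1) :=
                mul_le_mul_of_nonneg_left
                  (rpow_le_rpow_of_nonpos ht0 (by linarith) (by linarith)) (rpow_nonneg ht0.le _)
            _ = t ^ ((lam - a) - 1) := by rw [← rpow_add ht0]; ring_nf
    _ ≤ c ^ (lam - a) / (a - lam) := by
        simpa using integral_rpow_sub_one_le_of_neg (by linarith : lam - a < 0) hc hcb

end Kernel

theorem kernel_estimate_subcritical_general (a lam c : ℝ) (ha : a < 1)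
    (hla : lam < a) (hc0 : 0 < c) (hc1 : c ≤ 1) :
    ∫ t in (0:ℝ)..1, t ^ (-a) * (c + t) ^ (lam - 1) ≤
      c ^ (lam - a) * (1 - lam) / ((1 - a) * (a - lam)) := by
  have hlam : lam ≤ 1 := by linarith
  have hhead := intervalIntegrable_rpow_mul_add_rpow ha hc0 (lam - 1) hc0.le
  have hwhole := intervalIntegrable_rpow_mul_add_rpow ha hc0 (lam - 1) zero_le_one
  rw [← integral_add_adjacent_intervals hhead (hhead.symm.trans hwhole)]
  have hsum : c ^ (lam - a) / (1 - a) + c ^ (lam - a) / (a - lam) =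
      c ^ (lam - a) * (1 - lam) / ((1 - a) * (a - lam)) := by
    field_simp [(by linarith : (1 : ℝ) - a ≠ 0), (by linarith : a - lam ≠ 0)]
    ring
  linarith [integral_rpow_mul_add_rpow_le_head ha hlam hc0,
    integral_rpow_mul_add_rpow_le_tail hlam hla hc0 hc1]

theorem kernel_estimate_subcritical (a lam c : ℝ) (ha : a < 1) (hlam : lam < 1)
    (hla : lam < a) (hc0 : 0 < c) (hc1 : c ≤ 1) :
    ∫ t in (0:ℝ)..1, t ^ (-a) * (c + t) ^ (lam - 1) ≤
      c ^ (lam - a) * (1 - lam) / ((1 - a) * (a - lam)) :=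
  kernel_estimate_subcritical_general a lam c ha hla hc0 hc1
end

section
/- Let N ≥ 2, r > 0, γ the Euler–Mascheroni constant, and ψ the digamma function. Then the inequality 2 ln r ≤ 2 ln 2 + ψ(N/2 + s) + ψ(s+1) holds for all s ∈ (0,1) if and only if r ≤ r_N := 2 exp((ψ(N/2) − γ)/2). -/
open Real

/-- The digamma function `ψ = Γ'/Γ`. -/
noncomputable def digamma (x : ℝ) : ℝ := deriv Real.Gamma x / Real.Gamma x

lemma ne_neg_nat {x : ℝ} (hx : 0 < x) : ∀ m : ℕ, x ≠ -m := fun m h => by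
  have : (0:ℝ) ≤ m := Nat.cast_nonneg m
  linarith [h ▸ hx]

lemma digamma_one : digamma 1 = -Real.eulerMascheroniConstant := by
  rw [digamma, Real.hasDerivAt_Gamma_one.deriv, Real.Gamma_one, div_one]

lemma deriv_logGamma {x : ℝ} (hx : 0 < x) :
    deriv (Real.log ∘ Real.Gamma) x = digamma x := by
  rw [Function.comp_def, deriv.log (Real.differentiableAt_Gamma (ne_neg_nat hx))
    (Real.Gamma_pos_of_pos hx).ne', digamma]

lemma digamma_monotoneOn : MonotoneOn digamma (Set.Ioi 0) := by
  have h := Real.convexOn_log_Gamma.monotoneOn_deriv (fun x hx =>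
    (Real.differentiableAt_Gamma (ne_neg_nat hx)).log (Real.Gamma_pos_of_pos hx).ne')
  intro x hx y hy hxy
  have := h hx hy hxy
  rwa [deriv_logGamma hx, deriv_logGamma hy] at this

lemma deriv_Gamma_eq {x : ℝ} (hx : 0 < x) :
    deriv Real.Gamma x = (deriv Complex.Gamma x).re := by
  have hc : DifferentiableAt ℂ Complex.Gamma (x : ℂ) := by
    refine Complex.differentiableAt_Gamma _ fun m => ?_
    intro h
    have := congrArg Complex.re h
    simp at this
    exact absurd this (ne_neg_nat hx m)
  exact hc.hasDerivAt.real_of_complex.deriv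

lemma continuousAt_digamma {x : ℝ} (hx : 0 < x) : ContinuousAt digamma x := by
  have hS : IsOpen {z : ℂ | 0 < z.re} := isOpen_lt continuous_const Complex.continuous_re
  have hA : AnalyticOnNhd ℂ Complex.Gamma {z : ℂ | 0 < z.re} := by
    refine DifferentiableOn.analyticOnNhd (fun z hz => ?_) hS
    refine (Complex.differentiableAt_Gamma _ fun m => ?_).differentiableWithinAt
    intro h
    rw [h] at hz
    simp only [Set.mem_setOf_eq, Complex.neg_re, Complex.natCast_re] at hz
    have : (0:ℝ) ≤ m := Nat.cast_nonneg m
    linarith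
  have hAd : AnalyticOnNhd ℂ (deriv Complex.Gamma) {z : ℂ | 0 < z.re} := hA.deriv
  have hcd : ContinuousAt (fun y : ℝ => (deriv Complex.Gamma y).re) x := by
    exact Complex.continuous_re.continuousAt.comp
      (((hAd (x:ℂ) (by simpa using hx)).continuousAt).comp Complex.continuous_ofReal.continuousAt)
  have hG : ContinuousAt Real.Gamma x :=
    (Real.differentiableAt_Gamma (ne_neg_nat hx)).continuousAt
  have heq : digamma =ᶠ[nhds x] fun y => (deriv Complex.Gamma y).re / Real.Gamma y := by
    filter_upwards [eventually_gt_nhds hx] with y hy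
    rw [digamma, deriv_Gamma_eq hy]
  exact ContinuousAt.congr (hcd.div hG (Real.Gamma_pos_of_pos hx).ne') heq.symm

theorem ball_monotonicity_radius_criterion (N : ℕ) (hN : 2 ≤ N) (r : ℝ) (hr : 0 < r) :
    (∀ s ∈ Set.Ioo (0:ℝ) 1,
        2 * Real.log r ≤ 2 * Real.log 2 + digamma ((N:ℝ)/2 + s) + digamma (s + 1)) ↔
      r ≤ 2 * Real.exp ((digamma ((N:ℝ)/2) - Real.eulerMascheroniConstant) / 2) := by
  have hN2 : (0:ℝ) < (N:ℝ)/2 := by positivity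
  have hkey : (r ≤ 2 * Real.exp ((digamma ((N:ℝ)/2) - Real.eulerMascheroniConstant) / 2)) ↔
      2 * Real.log r ≤ 2 * Real.log 2 + digamma ((N:ℝ)/2) + digamma 1 := by
    rw [digamma_one]
    rw [← Real.log_le_log_iff hr (by positivity),
      Real.log_mul two_ne_zero (Real.exp_ne_zero _), Real.log_exp]
    constructor <;> intro h <;> linarith
  constructor
  · intro h
    rw [hkey]
    have hc : ContinuousAt (fun s : ℝ =>
        2 * Real.log 2 + digamma ((N:ℝ)/2 + s) + digamma (s + 1)) 0 := by
      have h1 : ContinuousAt (fun s : ℝ => digamma ((N:ℝ)/2 + s)) 0 := by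
        have hd : ContinuousAt digamma ((N:ℝ)/2 + 0) := by simpa using continuousAt_digamma hN2
        exact ContinuousAt.comp (g := digamma) (f := fun s : ℝ => (N:ℝ)/2 + s) hd (by fun_prop)
      have h2 : ContinuousAt (fun s : ℝ => digamma (s + 1)) 0 := by
        have hd : ContinuousAt digamma ((0:ℝ) + 1) := by simpa using continuousAt_digamma one_pos
        exact ContinuousAt.comp (g := digamma) (f := fun s : ℝ => s + 1) hd (by fun_prop)
      exact (continuousAt_const.add h1).add h2
    have ht : Filter.Tendsto (fun s : ℝ =>
        2 * Real.log 2 + digamma ((N:ℝ)/2 + s) + digamma (s + 1)) (nhdsWithin 0 (Set.Ioi 0))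
        (nhds (2 * Real.log 2 + digamma ((N:ℝ)/2 + 0) + digamma (0 + 1))) :=
      hc.continuousWithinAt.tendsto
    rw [add_zero, zero_add] at ht
    refine ge_of_tendsto ht ?_
    filter_upwards [Ioo_mem_nhdsGT_of_mem (Set.left_mem_Ico.2 one_pos)] with s hs
    exact h s hs
  · intro h s hs
    rw [hkey] at h
    have h1 : digamma ((N:ℝ)/2) ≤ digamma ((N:ℝ)/2 + s) :=
      digamma_monotoneOn hN2 (by simp; linarith [hs.1]) (by linarith [hs.1])
    have h2 : digamma 1 ≤ digamma (s + 1) :=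
      digamma_monotoneOn (Set.mem_Ioi.2 one_pos) (by simp; linarith [hs.1]) (by linarith [hs.1])
    linarith
end

section
/- Let I ⊂ ℝ be an open interval, E a Banach space, and α : I → E a continuous curve such that for every s ∈ I the right derivative ∂_s⁺α(s) = lim_{σ→0⁺} (α(s+σ) − α(s))/σ exists in E, and the map s ↦ ∂_s⁺α(s) is continuous on I. Then α is continuously differentiable on I with derivative ∂_s α = ∂_s⁺ α. -/
/-!
Subtracting the affine function `t ↦ t • d s` from `α` leaves a curve whose right derivative
`d t - d s` is small near `s`, by continuity of `d`. The mean value inequality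
for right derivatives then bounds its increments on both sides of `s`, which is exactly
two-sided differentiability at `s`.
-/

open Filter Topology Set

section

variable {E : Type*} [NormedAddCommGroup E] [NormedSpace ℝ E]

theorem hasDerivWithinAt_Ici_iff_tendsto_slope_zero_right {f : ℝ → E} {f' : E} {x : ℝ} :
    HasDerivWithinAt f f' (Ici x) x ↔
      Tendsto (fun t ↦ t⁻¹ • (f (x + t) - f x)) (𝓝[>] 0) (𝓝 f') := by
  rw [← hasDerivWithinAt_Ioi_iff_Ici,
    hasDerivWithinAt_iff_tendsto_slope' (s := Ioi x) (lt_irrefl x), ← add_zero x,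
    ← map_add_left_nhdsGT, tendsto_map'_iff]
  simp [Function.comp_def, slope_def_module]

theorem norm_image_sub_le_of_norm_deriv_right_le_uIcc {f f' : ℝ → E} {C a b : ℝ}
    (hf : ContinuousOn f (uIcc a b))
    (hf' : ∀ x ∈ uIcc a b, HasDerivWithinAt f (f' x) (Ici x) x)
    (bound : ∀ x ∈ uIcc a b, ‖f' x‖ ≤ C) : ‖f b - f a‖ ≤ C * |b - a| := by
  wlog hab : a ≤ b generalizing a b
  · rw [norm_sub_rev, abs_sub_comm]
    rw [uIcc_comm] at hf hf' bound
    exact this hf hf' bound (le_of_not_ge hab)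
  rw [uIcc_of_le hab] at hf hf' bound
  rw [abs_of_nonneg (sub_nonneg.2 hab)]
  exact norm_image_sub_le_of_norm_deriv_right_le_segment hf
    (fun x hx ↦ hf' x (Ico_subset_Icc_self hx)) (fun x hx ↦ bound x (Ico_subset_Icc_self hx))
    b (right_mem_Icc.2 hab)

theorem hasDerivAt_of_eventually_hasDerivWithinAt_Ici {f f' : ℝ → E} {s : ℝ}
    (hf : ∀ᶠ x in 𝓝 s, ContinuousAt f x)
    (hderiv : ∀ᶠ x in 𝓝 s, HasDerivWithinAt f (f' x) (Ici x) x)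
    (hf' : ContinuousAt f' s) : HasDerivAt f (f' s) s := by
  rw [hasDerivAt_iff_isLittleO, Asymptotics.isLittleO_iff]
  intro ε hε
  have hnear : ∀ᶠ x in 𝓝 s, (ContinuousAt f x ∧ HasDerivWithinAt f (f' x) (Ici x) x) ∧
      dist (f' x) (f' s) ≤ ε :=
    (hf.and hderiv).and (hf'.eventually (Metric.closedBall_mem_nhds _ hε))
  obtain ⟨δ, hδ, hball⟩ := Metric.eventually_nhds_iff_ball.1 hnear
  filter_upwards [Metric.ball_mem_nhds s hδ] with t ht
  have hsub : uIcc s t ⊆ Metric.ball s δ :=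
    (convex_ball s δ).ordConnected.uIcc_subset (Metric.mem_ball_self hδ) ht
  have key := norm_image_sub_le_of_norm_deriv_right_le_uIcc (f := fun x ↦ f x - x • f' s)
    (f' := fun x ↦ f' x - f' s) (C := ε) (a := s) (b := t)
    (fun x hx ↦ ((hball x (hsub hx)).1.1.sub
      (continuousAt_id.smul continuousAt_const)).continuousWithinAt)
    (fun x hx ↦ by
      have h := (hball x (hsub hx)).1.2.sub ((hasDerivWithinAt_id x _).smul_const (f' s))
      rwa [one_smul] at h)
    (fun x hx ↦ dist_eq_norm (f' x) (f' s) ▸ (hball x (hsub hx)).2)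
  rw [Real.norm_eq_abs]
  convert key using 2
  simp only [sub_smul]
  abel

end

theorem continuous_right_derivative_implies_C1_general
    {E : Type*} [NormedAddCommGroup E] [NormedSpace ℝ E]
    (I : Set ℝ) (hIopen : IsOpen I)
    (α : ℝ → E) (hα : ContinuousOn α I)
    (d : ℝ → E)
    (hd : ∀ s ∈ I, Tendsto (fun σ : ℝ => σ⁻¹ • (α (s + σ) - α s))
        (𝓝[>] (0:ℝ)) (𝓝 (d s)))
    (hdcont : ContinuousOn d I) :
    ∀ s ∈ I, HasDerivAt α (d s) s := by
  intro s hs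
  have hI : ∀ᶠ x in 𝓝 s, x ∈ I := hIopen.eventually_mem hs
  refine hasDerivAt_of_eventually_hasDerivWithinAt_Ici ?_ ?_
    (hdcont.continuousAt (hIopen.mem_nhds hs))
  · filter_upwards [hI] with x hx
    exact hα.continuousAt (hIopen.mem_nhds hx)
  · filter_upwards [hI] with x hx
    exact hasDerivWithinAt_Ici_iff_tendsto_slope_zero_right.2 (hd x hx)

theorem continuous_right_derivative_implies_C1
    {E : Type*} [NormedAddCommGroup E] [NormedSpace ℝ E] [CompleteSpace E]
    (I : Set ℝ) (hIopen : IsOpen I) (hIord : I.OrdConnected)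
    (α : ℝ → E) (hα : ContinuousOn α I)
    (d : ℝ → E)
    (hd : ∀ s ∈ I, Tendsto (fun σ : ℝ => σ⁻¹ • (α (s + σ) - α s))
        (𝓝[>] (0:ℝ)) (𝓝 (d s)))
    (hdcont : ContinuousOn d I) :
    ∀ s ∈ I, HasDerivAt α (d s) s :=
  continuous_right_derivative_implies_C1_general I hIopen α hα d hd hdcont
end

section
/- Let N ≥ 2 and s ∈ (0, 1/2]. Then there is a constant C = C(N) such that for all y ∈ ℝ^N with 0 < |y|, | (κ_{N,s}/s) |y|^{2s} − c_N | ≤ s C ( 1 + |ln|y|| + |ln|y|| · |y|^{2s} ), where κ_{N,s} = Γ(N/2 − s)/(4^s π^{N/2} Γ(s)) and c_N = Γ(N/2)/π^{N/2}. -/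
/-!
Write `κ_{N,s}/s = Γ(N/2 - s) / (4^s π^{N/2} Γ(s + 1))`: this is smooth in `s` on a neighbourhood
of `[0, 1/2]` (here `N ≥ 2` keeps `N/2 - s` away from the poles of `Γ`), so it is Lipschitz there,
and its value at `s = 0` is `c_N`. With `r = |y|^{2s}`, split
`(κ/s) r - c_N = (κ/s - c_N) r + c_N (r - 1)` and bound `|r - 1| ≤ 2s |ln|y|| max(1, r)` via
`|eˣ - 1| ≤ |x| max(1, eˣ)`; the same bound with `2s ≤ 1` also gives `r ≤ 1 + |ln|y|| (1 + r)`.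
-/

open Real Set

theorem Real.analyticAt_Gamma {x : ℝ} (hx : 0 < x) : AnalyticAt ℝ Gamma x := by
  have hre : {z : ℂ | 0 < z.re} ∈ nhds (x : ℂ) :=
    (isOpen_lt continuous_const Complex.continuous_re).mem_nhds (by simpa using hx)
  have hdiff : DifferentiableOn ℂ Complex.Gamma {z : ℂ | 0 < z.re} := fun z hz =>
    (Complex.differentiableAt_Gamma z fun m hm => by
      simp only [hm, mem_ofPred_eq, Complex.neg_re, Complex.natCast_re] at hz
      linarith [m.cast_nonneg (α := ℝ)]).differentiableWithinAt
  convert (hdiff.analyticAt hre).re_ofReal using 1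
  funext t
  rw [Complex.Gamma_ofReal, Complex.ofReal_re]

/-- `κ_{N,t} / t`, written with `Γ(t + 1) = t Γ(t)` so that it is smooth at `t = 0`. -/
noncomputable def rieszCoeff (N : ℕ) (t : ℝ) : ℝ :=
  Gamma ((N : ℝ) / 2 - t) / ((4 : ℝ) ^ t * π ^ ((N : ℝ) / 2) * Gamma (t + 1))

theorem rieszCoeff_eq {N : ℕ} {t : ℝ} (ht : t ≠ 0) :
    Gamma ((N : ℝ) / 2 - t) / ((4 : ℝ) ^ t * π ^ ((N : ℝ) / 2) * Gamma t) / t =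
      rieszCoeff N t := by
  rw [rieszCoeff, Gamma_add_one ht, div_div]
  ring

theorem rieszCoeff_zero (N : ℕ) : rieszCoeff N 0 = Gamma ((N : ℝ) / 2) / π ^ ((N : ℝ) / 2) := by
  simp [rieszCoeff]

theorem contDiffAt_rieszCoeff {N : ℕ} {t : ℝ} (ht₁ : -1 < t) (ht₂ : t < (N : ℝ) / 2)
    {n : WithTop ℕ∞} :
    ContDiffAt ℝ n (rieszCoeff N) t := by
  have hnum : ContDiffAt ℝ n (fun t : ℝ => Gamma ((N : ℝ) / 2 - t)) t :=
    (analyticAt_Gamma (sub_pos.2 ht₂)).contDiffAt.comp t (contDiffAt_const.sub contDiffAt_id)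
  have hGamma : ContDiffAt ℝ n (fun t : ℝ => Gamma (t + 1)) t :=
    (analyticAt_Gamma (by linarith)).contDiffAt.comp (f := fun t : ℝ => t + 1) t
      (contDiffAt_id.add contDiffAt_const)
  have hpow : ContDiffAt ℝ n (fun t : ℝ => (4 : ℝ) ^ t) t :=
    contDiffAt_const.rpow contDiffAt_id (by norm_num)
  refine hnum.div ((hpow.mul contDiffAt_const).mul hGamma) ?_
  have := Gamma_pos_of_pos (show 0 < t + 1 by linarith)
  positivity

theorem exists_abs_rieszCoeff_sub_le {N : ℕ} (hN : 2 ≤ N) :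
    ∃ K : ℝ, 0 ≤ K ∧ ∀ t ∈ Icc (0 : ℝ) (1 / 2), |rieszCoeff N t - rieszCoeff N 0| ≤ K * t := by
  have hN' : (1 : ℝ) ≤ (N : ℝ) / 2 := by
    rw [le_div_iff₀ two_pos]; exact_mod_cast hN
  obtain ⟨K, hK⟩ := ContDiffOn.exists_lipschitzOnWith (n := 1)
    (fun t ht => (contDiffAt_rieszCoeff (N := N) (by linarith [ht.1])
      (by linarith [ht.2])).contDiffWithinAt)
    one_ne_zero (convex_Icc (0 : ℝ) (1 / 2)) isCompact_Icc
  refine ⟨K, K.coe_nonneg, fun t ht => ?_⟩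
  simpa [Real.dist_eq, abs_of_nonneg ht.1] using hK.dist_le_mul t ht 0 ⟨le_rfl, by norm_num⟩

theorem abs_exp_sub_one_le_mul_max (x : ℝ) : |exp x - 1| ≤ |x| * max 1 (exp x) := by
  rcases le_total 0 x with hx | hx
  · have hinv : exp (-x) * exp x = 1 := by rw [← exp_add, neg_add_cancel, exp_zero]
    have := add_one_le_exp (-x)
    rw [abs_of_nonneg (by linarith [add_one_le_exp x]), abs_of_nonneg hx,
      max_eq_right (one_le_exp hx)]
    nlinarith [exp_pos x]
  · rw [abs_of_nonpos (by linarith [exp_le_one_iff.2 hx]), abs_of_nonpos hx]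
    nlinarith [add_one_le_exp x, le_max_left 1 (exp x)]

theorem abs_rpow_sub_one_le_mul_max {x : ℝ} (hx : 0 < x) (p : ℝ) :
    |x ^ p - 1| ≤ |p * log x| * max 1 (x ^ p) := by
  simpa [rpow_def_of_pos hx, mul_comm] using abs_exp_sub_one_le_mul_max (p * log x)

theorem riesz_kernel_expansion_estimate (N : ℕ) (hN : 2 ≤ N) :
    ∃ C : ℝ, 0 < C ∧ ∀ s ∈ Set.Ioc (0:ℝ) (1/2), ∀ y : EuclideanSpace ℝ (Fin N), y ≠ 0 →
      |Real.Gamma ((N:ℝ)/2 - s) / ((4:ℝ) ^ s * π ^ ((N:ℝ)/2) * Real.Gamma s) / s *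
          ‖y‖ ^ (2 * s) - Real.Gamma ((N:ℝ)/2) / π ^ ((N:ℝ)/2)| ≤
        s * C * (1 + |Real.log ‖y‖| + |Real.log ‖y‖| * ‖y‖ ^ (2 * s)) := by
  obtain ⟨K, hK, hlip⟩ := exists_abs_rieszCoeff_sub_le hN
  set c := Gamma ((N : ℝ) / 2) / π ^ ((N : ℝ) / 2)
  have hc : 0 < c := div_pos (Gamma_pos_of_pos (by positivity)) (rpow_pos_of_pos pi_pos _)
  refine ⟨K + 2 * c, by positivity, fun s ⟨hs₀, hs₁⟩ y hy => ?_⟩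
  rw [rieszCoeff_eq hs₀.ne']
  set L := |log ‖y‖|
  set r := ‖y‖ ^ (2 * s)
  have hr : 0 < r := rpow_pos_of_pos (norm_pos_iff.2 hy) _
  have hκ : |rieszCoeff N s - c| ≤ K * s := by
    have := hlip s ⟨hs₀.le, hs₁⟩
    rwa [rieszCoeff_zero] at this
  have hr₁ : |r - 1| ≤ 2 * s * L * (1 + r) := by
    have := abs_rpow_sub_one_le_mul_max (norm_pos_iff.2 hy) (2 * s)
    rw [abs_mul, abs_of_pos (by positivity : 0 < 2 * s)] at this
    exact this.trans (mul_le_mul_of_nonneg_left (max_le (by linarith) (by linarith))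
      (by positivity))
  have hL : 0 ≤ L := abs_nonneg _
  have hr_le : r ≤ 1 + L + L * r := by
    have : 2 * s * L * (1 + r) ≤ L * (1 + r) :=
      mul_le_mul_of_nonneg_right (by nlinarith) (by positivity)
    linarith [le_abs_self (r - 1)]
  calc |rieszCoeff N s * r - c| = |(rieszCoeff N s - c) * r + c * (r - 1)| := by ring_nf
    _ ≤ |rieszCoeff N s - c| * r + c * |r - 1| :=
      (abs_add_le _ _).trans_eq (by rw [abs_mul, abs_mul, abs_of_pos hr, abs_of_pos hc])
    _ ≤ K * s * (1 + L + L * r) + c * (2 * s * L * (1 + r)) := by gcongr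
    _ ≤ s * (K + 2 * c) * (1 + L + L * r) := by nlinarith
end
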